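/- For all constants α ∈ ℝ, β ∈ ℝ and every smooth f : ℝ^d × ℝ^d → ℝ, at every point of ℝ^d × ℝ^d one has the identity Γ₂^{α,β}(f) = α·Σ_{i=1}^d (∂_{ξ_i} f)² − Σ_{i=1}^d (∂_{ξ_i} f)(∂_{p_i} f) + (σ²/2)·Σ_{i=1}^d Σ_{j=1}^d ( ∂²f/∂p_i∂p_j − α·∂²f/∂p_i∂ξ_j )² + (σ² β/2)·Σ_{i=1}^d Σ_{j=1}^d ( ∂²f/∂p_i∂ξ_j )². -/

import Mathlib

noncomputable section

abbrev Ed (d : ℕ) : Type := EuclideanSpace ℝ (Fin d)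

/-- Partial derivative in the variable `p_i`. -/
def dP (d : ℕ) (i : Fin d) (f : Ed d × Ed d → ℝ) (x : Ed d × Ed d) : ℝ :=
  fderiv ℝ f x ((EuclideanSpace.single i 1 : Ed d), (0 : Ed d))

/-- Partial derivative in the variable `ξ_i`. -/
def dXi (d : ℕ) (i : Fin d) (f : Ed d × Ed d → ℝ) (x : Ed d × Ed d) : ℝ :=
  fderiv ℝ f x ((0 : Ed d), (EuclideanSpace.single i 1 : Ed d))

/-- Gradient in the `p` variable. -/
def gradP (d : ℕ) (f : Ed d × Ed d → ℝ) (x : Ed d × Ed d) : Ed d :=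
  gradient (fun p => f (p, x.2)) x.1

/-- Gradient in the `ξ` variable. -/
def gradXi (d : ℕ) (f : Ed d × Ed d → ℝ) (x : Ed d × Ed d) : Ed d :=
  gradient (fun ξ => f (x.1, ξ)) x.2

/-- The Kolmogorov operator `Lf(p,ξ) = ⟨p, ∇_ξ f(p,ξ)⟩ + (σ²/2)Δ_p f(p,ξ)`. -/
def Lkol (d : ℕ) (σ : ℝ) (f : Ed d × Ed d → ℝ) (x : Ed d × Ed d) : ℝ :=
  inner ℝ x.1 (gradXi d f x) + σ ^ 2 / 2 * ∑ i : Fin d, dP d i (fun y => dP d i f y) x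

/-- The bilinear form `Γ^{α,β}(f,g)`. -/
def gamAB (d : ℕ) (α β : ℝ) (f g : Ed d × Ed d → ℝ) (x : Ed d × Ed d) : ℝ :=
  inner ℝ (gradP d f x) (gradP d g x) - α * inner ℝ (gradP d f x) (gradXi d g x)
    - α * inner ℝ (gradXi d f x) (gradP d g x)
    + (α ^ 2 + β) * inner ℝ (gradXi d f x) (gradXi d g x)

/-- `Γ₂^{α,β}(f) = (1/2)L(Γ^{α,β}(f)) − Γ^{α,β}(f, Lf)`. -/
def gamAB2 (d : ℕ) (σ α β : ℝ) (f : Ed d × Ed d → ℝ) (x : Ed d × Ed d) : ℝ :=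
  1 / 2 * Lkol d σ (gamAB d α β f f) x - gamAB d α β f (Lkol d σ f) x

namespace G2
variable {d : ℕ}

def vp (i : Fin d) : Ed d × Ed d := (EuclideanSpace.single i 1, 0)
def vx (i : Fin d) : Ed d × Ed d := (0, EuclideanSpace.single i 1)

def D (v : Ed d × Ed d) (f : Ed d × Ed d → ℝ) : Ed d × Ed d → ℝ :=
  fun x => fderiv ℝ f x v

lemma contDiff_D (v : Ed d × Ed d) {f : Ed d × Ed d → ℝ} (hf : ContDiff ℝ (⊤ : ℕ∞) f) :
    ContDiff ℝ (⊤ : ℕ∞) (D v f) :=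
  (hf.fderiv_right (by simp)).clm_apply contDiff_const

lemma D_D (v w : Ed d × Ed d) {f : Ed d × Ed d → ℝ} (hf : ContDiff ℝ (⊤ : ℕ∞) f)
    (x : Ed d × Ed d) : D v (D w f) x = fderiv ℝ (fderiv ℝ f) x v w := by
  have hd : DifferentiableAt ℝ (fderiv ℝ f) x :=
    ((hf.fderiv_right (m := 1) (by exact WithTop.coe_le_coe.mpr le_top)).differentiable one_ne_zero) x
  show fderiv ℝ (fun y => (fderiv ℝ f y) w) x v = _
  rw [fderiv_clm_apply hd (differentiableAt_const w)]
  simp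

lemma D_comm (v w : Ed d × Ed d) {f : Ed d × Ed d → ℝ} (hf : ContDiff ℝ (⊤ : ℕ∞) f) :
    D v (D w f) = D w (D v f) := by
  funext x
  rw [D_D v w hf x, D_D w v hf x,
    (hf.contDiffAt.isSymmSndFDerivAt (by rw [minSmoothness_of_isRCLikeNormedField]; exact WithTop.coe_le_coe.mpr le_top)).eq]

variable {f g h : Ed d × Ed d → ℝ} {v : Ed d × Ed d} {x : Ed d × Ed d}

lemma D_mul (hg : ContDiff ℝ (⊤ : ℕ∞) g) (hh : ContDiff ℝ (⊤ : ℕ∞) h) :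
    D v (fun y => g y * h y) x = D v g x * h x + g x * D v h x := by
  show fderiv ℝ (fun y => g y * h y) x v = _
  rw [fderiv_fun_mul (hg.differentiable (by simp) x) (hh.differentiable (by simp) x)]
  simp only [ContinuousLinearMap.add_apply, ContinuousLinearMap.smul_apply, smul_eq_mul]
  show g x * D v h x + h x * D v g x = _
  ring

lemma D_add (hg : ContDiff ℝ (⊤ : ℕ∞) g) (hh : ContDiff ℝ (⊤ : ℕ∞) h) :
    D v (fun y => g y + h y) x = D v g x + D v h x := by
  show fderiv ℝ (fun y => g y + h y) x v = _
  rw [fderiv_fun_add (hg.differentiable (by simp) x) (hh.differentiable (by simp) x)]; rfl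

lemma D_sub (hg : ContDiff ℝ (⊤ : ℕ∞) g) (hh : ContDiff ℝ (⊤ : ℕ∞) h) :
    D v (fun y => g y - h y) x = D v g x - D v h x := by
  show fderiv ℝ (fun y => g y - h y) x v = _
  rw [fderiv_fun_sub (hg.differentiable (by simp) x) (hh.differentiable (by simp) x)]; rfl

lemma D_const_mul (c : ℝ) (hg : ContDiff ℝ (⊤ : ℕ∞) g) :
    D v (fun y => c * g y) x = c * D v g x := by
  show fderiv ℝ (fun y => c * g y) x v = _
  rw [fderiv_const_mul (hg.differentiable (by simp) x)]; rfl

lemma D_sum {F : Fin d → Ed d × Ed d → ℝ} (hF : ∀ j, ContDiff ℝ (⊤ : ℕ∞) (F j)) :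
    D v (fun y => ∑ j : Fin d, F j y) x = ∑ j : Fin d, D v (F j) x := by
  show fderiv ℝ (fun y => ∑ j : Fin d, F j y) x v = _
  rw [fderiv_fun_sum (fun j _ => (hF j).differentiable (by simp) x)]
  simp only [ContinuousLinearMap.sum_apply]
  rfl

lemma D_coord (j : Fin d) : D v (fun y => y.1 j) x = v.1 j := by
  have : (fun y : Ed d × Ed d => y.1 j)
      = fun y => (EuclideanSpace.proj j).comp (ContinuousLinearMap.fst ℝ (Ed d) (Ed d)) y := rfl
  show fderiv ℝ _ x v = _
  rw [this, ContinuousLinearMap.fderiv]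
  rfl

lemma contDiff_coord (j : Fin d) : ContDiff ℝ (⊤ : ℕ∞) (fun y : Ed d × Ed d => y.1 j) :=
  ((EuclideanSpace.proj j).comp (ContinuousLinearMap.fst ℝ (Ed d) (Ed d))).contDiff

lemma D_coord_mul (j : Fin d) (hg : ContDiff ℝ (⊤ : ℕ∞) g) :
    D v (fun y => y.1 j * g y) x = v.1 j * g x + x.1 j * D v g x := by
  rw [D_mul (contDiff_coord j) hg, D_coord]

lemma dP_eq (i : Fin d) (f : Ed d × Ed d → ℝ) : dP d i f = D (vp i) f := rfl
lemma dXi_eq (i : Fin d) (f : Ed d × Ed d → ℝ) : dXi d i f = D (vx i) f := rfl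

variable {f g : Ed d × Ed d → ℝ} {x : Ed d × Ed d}

lemma gradP_apply (hf : DifferentiableAt ℝ f x) (i : Fin d) :
    gradP d f x i = dP d i f x := by
  have hx : (x.1, x.2) = x := rfl
  have hinc : HasFDerivAt (fun p : Ed d => (p, x.2))
      ((ContinuousLinearMap.id ℝ (Ed d)).prod 0) x.1 :=
    HasFDerivAt.prodMk (hasFDerivAt_id x.1) (hasFDerivAt_const x.2 x.1)
  have hcomp : HasFDerivAt (fun p => f (p, x.2))
      ((fderiv ℝ f x).comp ((ContinuousLinearMap.id ℝ (Ed d)).prod 0)) x.1 := by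
    refine HasFDerivAt.comp x.1 ?_ hinc
    rw [hx]; exact hf.hasFDerivAt
  have h1 : gradP d f x = (InnerProductSpace.toDual ℝ (Ed d)).symm
      ((fderiv ℝ f x).comp ((ContinuousLinearMap.id ℝ (Ed d)).prod 0)) := by
    rw [gradP, gradient, hcomp.fderiv]
  rw [h1]
  have h2 : ∀ u : Ed d, u i = (inner ℝ u (EuclideanSpace.single i (1:ℝ)) : ℝ) := by
    intro u; rw [EuclideanSpace.inner_single_right]; simp
  have h3 := h2 ((InnerProductSpace.toDual ℝ (Ed d)).symm
      ((fderiv ℝ f x).comp ((ContinuousLinearMap.id ℝ (Ed d)).prod 0)))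
  rw [h3, InnerProductSpace.toDual_symm_apply]
  simp [dP]

lemma gradXi_apply (hf : DifferentiableAt ℝ f x) (i : Fin d) :
    gradXi d f x i = dXi d i f x := by
  have hx : (x.1, x.2) = x := rfl
  have hinc : HasFDerivAt (fun ξ : Ed d => (x.1, ξ))
      ((0 : Ed d →L[ℝ] Ed d).prod (ContinuousLinearMap.id ℝ (Ed d))) x.2 :=
    HasFDerivAt.prodMk (hasFDerivAt_const x.1 x.2) (hasFDerivAt_id x.2)
  have hcomp : HasFDerivAt (fun ξ => f (x.1, ξ))
      ((fderiv ℝ f x).comp ((0 : Ed d →L[ℝ] Ed d).prod (ContinuousLinearMap.id ℝ (Ed d)))) x.2 := by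
    refine HasFDerivAt.comp x.2 ?_ hinc
    rw [hx]; exact hf.hasFDerivAt
  have h1 : gradXi d f x = (InnerProductSpace.toDual ℝ (Ed d)).symm
      ((fderiv ℝ f x).comp ((0 : Ed d →L[ℝ] Ed d).prod (ContinuousLinearMap.id ℝ (Ed d)))) := by
    rw [gradXi, gradient, hcomp.fderiv]
  rw [h1]
  have h2 : ∀ u : Ed d, u i = (inner ℝ u (EuclideanSpace.single i (1:ℝ)) : ℝ) := by
    intro u; rw [EuclideanSpace.inner_single_right]; simp
  have h3 := h2 ((InnerProductSpace.toDual ℝ (Ed d)).symm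
      ((fderiv ℝ f x).comp ((0 : Ed d →L[ℝ] Ed d).prod (ContinuousLinearMap.id ℝ (Ed d)))))
  rw [h3, InnerProductSpace.toDual_symm_apply]
  simp [dXi]

lemma inner_eq_sum (u v : Ed d) : (inner ℝ u v : ℝ) = ∑ i, u i * v i := by
  simp [PiLp.inner_apply, RCLike.inner_apply, conj_trivial, mul_comm]

lemma inner_gradP_gradP (hf : DifferentiableAt ℝ f x) (hg : DifferentiableAt ℝ g x) :
    (inner ℝ (gradP d f x) (gradP d g x) : ℝ) = ∑ i, D (vp i) f x * D (vp i) g x := by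
  rw [inner_eq_sum]
  exact Finset.sum_congr rfl fun i _ => by
    rw [gradP_apply hf i, gradP_apply hg i, dP_eq, dP_eq]

lemma inner_gradP_gradXi (hf : DifferentiableAt ℝ f x) (hg : DifferentiableAt ℝ g x) :
    (inner ℝ (gradP d f x) (gradXi d g x) : ℝ) = ∑ i, D (vp i) f x * D (vx i) g x := by
  rw [inner_eq_sum]
  exact Finset.sum_congr rfl fun i _ => by
    rw [gradP_apply hf i, gradXi_apply hg i, dP_eq, dXi_eq]

lemma inner_gradXi_gradP (hf : DifferentiableAt ℝ f x) (hg : DifferentiableAt ℝ g x) :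
    (inner ℝ (gradXi d f x) (gradP d g x) : ℝ) = ∑ i, D (vx i) f x * D (vp i) g x := by
  rw [inner_eq_sum]
  exact Finset.sum_congr rfl fun i _ => by
    rw [gradXi_apply hf i, gradP_apply hg i, dXi_eq, dP_eq]

lemma inner_gradXi_gradXi (hf : DifferentiableAt ℝ f x) (hg : DifferentiableAt ℝ g x) :
    (inner ℝ (gradXi d f x) (gradXi d g x) : ℝ) = ∑ i, D (vx i) f x * D (vx i) g x := by
  rw [inner_eq_sum]
  exact Finset.sum_congr rfl fun i _ => by
    rw [gradXi_apply hf i, gradXi_apply hg i, dXi_eq, dXi_eq]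

lemma inner_fst_gradXi (hf : DifferentiableAt ℝ f x) :
    (inner ℝ x.1 (gradXi d f x) : ℝ) = ∑ i, x.1 i * D (vx i) f x := by
  rw [inner_eq_sum]
  exact Finset.sum_congr rfl fun i _ => by rw [gradXi_apply hf i, dXi_eq]
-- Part 2: expansion lemmas
variable {σ α β : ℝ}

lemma gsummand_smooth (α' c2 : ℝ) {A B : Ed d × Ed d → ℝ}
    (hA : ContDiff ℝ (⊤ : ℕ∞) A) (hB : ContDiff ℝ (⊤ : ℕ∞) B) :
    ContDiff ℝ (⊤ : ℕ∞) (fun y => A y * A y - α' * (A y * B y) - α' * (B y * A y)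
      + c2 * (B y * B y)) :=
  (((hA.mul hA).sub (contDiff_const.mul (hA.mul hB))).sub
    (contDiff_const.mul (hB.mul hA))).add (contDiff_const.mul (hB.mul hB))

lemma D_gsummand (α' c2 : ℝ) {A B : Ed d × Ed d → ℝ}
    (hA : ContDiff ℝ (⊤ : ℕ∞) A) (hB : ContDiff ℝ (⊤ : ℕ∞) B) (v x) :
    D v (fun y => A y * A y - α' * (A y * B y) - α' * (B y * A y) + c2 * (B y * B y)) x
      = 2*(D v A x * A x) - 2*α'*(D v A x * B x) - 2*α'*(A x * D v B x)
        + 2*c2*(D v B x * B x) := by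
  have h1 : ContDiff ℝ (⊤ : ℕ∞) (fun y => A y * A y) := hA.mul hA
  have h2 : ContDiff ℝ (⊤ : ℕ∞) (fun y => α' * (A y * B y)) := contDiff_const.mul (hA.mul hB)
  have h3 : ContDiff ℝ (⊤ : ℕ∞) (fun y => α' * (B y * A y)) := contDiff_const.mul (hB.mul hA)
  have h4 : ContDiff ℝ (⊤ : ℕ∞) (fun y => c2 * (B y * B y)) := contDiff_const.mul (hB.mul hB)
  have h12 : ContDiff ℝ (⊤ : ℕ∞) (fun y => A y * A y - α' * (A y * B y)) := h1.sub h2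
  have h123 : ContDiff ℝ (⊤ : ℕ∞) (fun y => A y * A y - α' * (A y * B y) - α' * (B y * A y)) :=
    h12.sub h3
  rw [D_add h123 h4, D_sub h12 h3, D_sub h1 h2,
    D_const_mul _ (hA.mul hB), D_const_mul _ (hB.mul hA), D_const_mul _ (hB.mul hB),
    D_mul hA hA, D_mul hA hB, D_mul hB hA, D_mul hB hB]
  ring

lemma gsummand2_smooth (α' c2 : ℝ) {A B P Q : Ed d × Ed d → ℝ}
    (hA : ContDiff ℝ (⊤ : ℕ∞) A) (hB : ContDiff ℝ (⊤ : ℕ∞) B) (hP : ContDiff ℝ (⊤ : ℕ∞) P)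
    (hQ : ContDiff ℝ (⊤ : ℕ∞) Q) :
    ContDiff ℝ (⊤ : ℕ∞) (fun y => 2*(P y * A y) - 2*α'*(P y * B y) - 2*α'*(A y * Q y)
      + 2*c2*(Q y * B y)) :=
  (((contDiff_const.mul (hP.mul hA)).sub (contDiff_const.mul (hP.mul hB))).sub
    (contDiff_const.mul (hA.mul hQ))).add (contDiff_const.mul (hQ.mul hB))

lemma D_gsummand2 (α' c2 : ℝ) {A B P Q : Ed d × Ed d → ℝ}
    (hA : ContDiff ℝ (⊤ : ℕ∞) A) (hB : ContDiff ℝ (⊤ : ℕ∞) B) (hP : ContDiff ℝ (⊤ : ℕ∞) P)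
    (hQ : ContDiff ℝ (⊤ : ℕ∞) Q) (v x) :
    D v (fun y => 2*(P y * A y) - 2*α'*(P y * B y) - 2*α'*(A y * Q y)
        + 2*c2*(Q y * B y)) x
      = 2*(D v P x * A x + P x * D v A x) - 2*α'*(D v P x * B x + P x * D v B x)
        - 2*α'*(D v A x * Q x + A x * D v Q x) + 2*c2*(D v Q x * B x + Q x * D v B x) := by
  have h1 : ContDiff ℝ (⊤ : ℕ∞) (fun y => 2*(P y * A y)) := contDiff_const.mul (hP.mul hA)
  have h2 : ContDiff ℝ (⊤ : ℕ∞) (fun y => 2*α'*(P y * B y)) := contDiff_const.mul (hP.mul hB)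
  have h3 : ContDiff ℝ (⊤ : ℕ∞) (fun y => 2*α'*(A y * Q y)) := contDiff_const.mul (hA.mul hQ)
  have h4 : ContDiff ℝ (⊤ : ℕ∞) (fun y => 2*c2*(Q y * B y)) := contDiff_const.mul (hQ.mul hB)
  have h12 : ContDiff ℝ (⊤ : ℕ∞) (fun y => 2*(P y * A y) - 2*α'*(P y * B y)) := h1.sub h2
  have h123 : ContDiff ℝ (⊤ : ℕ∞)
      (fun y => 2*(P y * A y) - 2*α'*(P y * B y) - 2*α'*(A y * Q y)) := h12.sub h3
  rw [D_add h123 h4, D_sub h12 h3, D_sub h1 h2,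
    D_const_mul _ (hP.mul hA), D_const_mul _ (hP.mul hB), D_const_mul _ (hA.mul hQ),
    D_const_mul _ (hQ.mul hB), D_mul hP hA, D_mul hP hB, D_mul hA hQ, D_mul hQ hB]

variable {f : Ed d × Ed d → ℝ}

lemma gamAB_self (α β : ℝ) (hf : ContDiff ℝ (⊤ : ℕ∞) f) :
    gamAB d α β f f = fun y => ∑ i : Fin d,
      (D (vp i) f y * D (vp i) f y - α * (D (vp i) f y * D (vx i) f y)
        - α * (D (vx i) f y * D (vp i) f y)
        + (α ^ 2 + β) * (D (vx i) f y * D (vx i) f y)) := by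
  funext y
  have hd := hf.differentiable (by simp) y
  simp only [gamAB]
  rw [inner_gradP_gradP hd hd, inner_gradP_gradXi hd hd, inner_gradXi_gradP hd hd,
    inner_gradXi_gradXi hd hd, Finset.mul_sum, Finset.mul_sum, Finset.mul_sum,
    ← Finset.sum_sub_distrib, ← Finset.sum_sub_distrib, ← Finset.sum_add_distrib]

lemma gamAB_self_smooth (hf : ContDiff ℝ (⊤ : ℕ∞) f) :
    ContDiff ℝ (⊤ : ℕ∞) (gamAB d α β f f) := by
  rw [gamAB_self α β hf]
  exact ContDiff.sum fun i _ =>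
    gsummand_smooth α (α^2+β) (contDiff_D (vp i) hf) (contDiff_D (vx i) hf)

lemma Lkol_eq (σ : ℝ) (hf : ContDiff ℝ (⊤ : ℕ∞) f) :
    Lkol d σ f = fun y => (∑ j : Fin d, y.1 j * D (vx j) f y)
      + σ ^ 2 / 2 * ∑ j : Fin d, D (vp j) (D (vp j) f) y := by
  funext y
  simp only [Lkol]
  rw [inner_fst_gradXi (hf.differentiable (by simp) y)]
  rfl

lemma Lkol_smooth (σ : ℝ) (hf : ContDiff ℝ (⊤ : ℕ∞) f) : ContDiff ℝ (⊤ : ℕ∞) (Lkol d σ f) := by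
  rw [Lkol_eq σ hf]
  exact (ContDiff.sum fun j _ => (contDiff_coord j).mul (contDiff_D _ hf)).add
    (contDiff_const.mul (ContDiff.sum fun j _ => contDiff_D _ (contDiff_D _ hf)))

lemma Lkol_expand (σ : ℝ) {h : Ed d × Ed d → ℝ} (hh : ContDiff ℝ (⊤ : ℕ∞) h) (x) :
    Lkol d σ h x = (∑ i : Fin d, x.1 i * D (vx i) h x)
      + σ ^ 2 / 2 * ∑ i : Fin d, D (vp i) (D (vp i) h) x := by
  simp only [Lkol]
  rw [inner_fst_gradXi (hh.differentiable (by simp) x)]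
  rfl

lemma gamAB_expand (α β : ℝ) {g : Ed d × Ed d → ℝ} (hf : DifferentiableAt ℝ f x)
    (hg : DifferentiableAt ℝ g x) :
    gamAB d α β f g x = (∑ i : Fin d, D (vp i) f x * D (vp i) g x)
      - α * (∑ i : Fin d, D (vp i) f x * D (vx i) g x)
      - α * (∑ i : Fin d, D (vx i) f x * D (vp i) g x)
      + (α ^ 2 + β) * (∑ i : Fin d, D (vx i) f x * D (vx i) g x) := by
  simp only [gamAB]
  rw [inner_gradP_gradP hf hg, inner_gradP_gradXi hf hg, inner_gradXi_gradP hf hg,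
    inner_gradXi_gradXi hf hg]

-- Part 3: explicit derivatives of Γ(f,f) and of Lf
lemma DxG (α β : ℝ) (hf : ContDiff ℝ (⊤ : ℕ∞) f) (i : Fin d) (x : Ed d × Ed d) :
    D (vx i) (gamAB d α β f f) x = ∑ j : Fin d,
      (2*(D (vp j) (D (vx i) f) x * D (vp j) f x)
        - 2*α*(D (vp j) (D (vx i) f) x * D (vx j) f x)
        - 2*α*(D (vp j) f x * D (vx i) (D (vx j) f) x)
        + 2*(α^2+β)*(D (vx i) (D (vx j) f) x * D (vx j) f x)) := by
  rw [gamAB_self α β hf]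
  rw [D_sum (F := fun j => fun y =>
      (D (vp j) f y * D (vp j) f y - α * (D (vp j) f y * D (vx j) f y)
        - α * (D (vx j) f y * D (vp j) f y)
        + (α ^ 2 + β) * (D (vx j) f y * D (vx j) f y)))
    (fun j => gsummand_smooth α (α^2+β) (contDiff_D (vp j) hf) (contDiff_D (vx j) hf))]
  refine Finset.sum_congr rfl fun j _ => ?_
  rw [D_gsummand α (α^2+β) (contDiff_D (vp j) hf) (contDiff_D (vx j) hf)]
  rw [D_comm (vx i) (vp j) hf]

lemma DpG (α β : ℝ) (hf : ContDiff ℝ (⊤ : ℕ∞) f) (k : Fin d) :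
    D (vp k) (gamAB d α β f f) = fun x => ∑ j : Fin d,
      (2*(D (vp k) (D (vp j) f) x * D (vp j) f x)
        - 2*α*(D (vp k) (D (vp j) f) x * D (vx j) f x)
        - 2*α*(D (vp j) f x * D (vp k) (D (vx j) f) x)
        + 2*(α^2+β)*(D (vp k) (D (vx j) f) x * D (vx j) f x)) := by
  funext x
  rw [gamAB_self α β hf]
  rw [D_sum (F := fun j => fun y =>
      (D (vp j) f y * D (vp j) f y - α * (D (vp j) f y * D (vx j) f y)
        - α * (D (vx j) f y * D (vp j) f y)
        + (α ^ 2 + β) * (D (vx j) f y * D (vx j) f y)))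
    (fun j => gsummand_smooth α (α^2+β) (contDiff_D (vp j) hf) (contDiff_D (vx j) hf))]
  exact Finset.sum_congr rfl fun j _ =>
    D_gsummand α (α^2+β) (contDiff_D (vp j) hf) (contDiff_D (vx j) hf) (vp k) x

lemma DDpG (α β : ℝ) (hf : ContDiff ℝ (⊤ : ℕ∞) f) (k : Fin d) (x : Ed d × Ed d) :
    D (vp k) (D (vp k) (gamAB d α β f f)) x = ∑ j : Fin d,
      (2*(D (vp k) (D (vp k) (D (vp j) f)) x * D (vp j) f x
            + D (vp k) (D (vp j) f) x * D (vp k) (D (vp j) f) x)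
        - 2*α*(D (vp k) (D (vp k) (D (vp j) f)) x * D (vx j) f x
            + D (vp k) (D (vp j) f) x * D (vp k) (D (vx j) f) x)
        - 2*α*(D (vp k) (D (vp j) f) x * D (vp k) (D (vx j) f) x
            + D (vp j) f x * D (vp k) (D (vp k) (D (vx j) f)) x)
        + 2*(α^2+β)*(D (vp k) (D (vp k) (D (vx j) f)) x * D (vx j) f x
            + D (vp k) (D (vx j) f) x * D (vp k) (D (vx j) f) x)) := by
  rw [DpG α β hf k]
  rw [D_sum (F := fun j => fun y =>
      (2*(D (vp k) (D (vp j) f) y * D (vp j) f y)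
        - 2*α*(D (vp k) (D (vp j) f) y * D (vx j) f y)
        - 2*α*(D (vp j) f y * D (vp k) (D (vx j) f) y)
        + 2*(α^2+β)*(D (vp k) (D (vx j) f) y * D (vx j) f y)))
    (fun j => gsummand2_smooth α (α^2+β) (contDiff_D (vp j) hf) (contDiff_D (vx j) hf)
      (contDiff_D (vp k) (contDiff_D (vp j) hf)) (contDiff_D (vp k) (contDiff_D (vx j) hf)))]
  exact Finset.sum_congr rfl fun j _ =>
    D_gsummand2 α (α^2+β) (contDiff_D (vp j) hf) (contDiff_D (vx j) hf)
      (contDiff_D (vp k) (contDiff_D (vp j) hf)) (contDiff_D (vp k) (contDiff_D (vx j) hf))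
      (vp k) x

lemma sum_single_mul (i : Fin d) (g : Fin d → ℝ) :
    ∑ j : Fin d, (EuclideanSpace.single i (1:ℝ)) j * g j = g i := by
  simp [EuclideanSpace.single_apply, ite_mul]

lemma DpLf (σ : ℝ) (hf : ContDiff ℝ (⊤ : ℕ∞) f) (i : Fin d) (x : Ed d × Ed d) :
    D (vp i) (Lkol d σ f) x = D (vx i) f x
      + (∑ j : Fin d, x.1 j * D (vp i) (D (vx j) f) x)
      + σ^2/2 * ∑ j : Fin d, D (vp j) (D (vp j) (D (vp i) f)) x := by
  rw [Lkol_eq σ hf]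
  have hS1 : ContDiff ℝ (⊤ : ℕ∞) (fun y : Ed d × Ed d => ∑ j : Fin d, y.1 j * D (vx j) f y) :=
    ContDiff.sum fun j _ => (contDiff_coord j).mul (contDiff_D _ hf)
  have hS2c : ContDiff ℝ (⊤ : ℕ∞) (fun y : Ed d × Ed d =>
      σ^2/2 * ∑ j : Fin d, D (vp j) (D (vp j) f) y) :=
    contDiff_const.mul (ContDiff.sum fun j _ => contDiff_D _ (contDiff_D _ hf))
  rw [D_add hS1 hS2c,
    D_const_mul _ (ContDiff.sum fun j _ => contDiff_D (vp j) (contDiff_D (vp j) hf)),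
    D_sum (F := fun j => fun y => y.1 j * D (vx j) f y)
      (fun j => (contDiff_coord j).mul (contDiff_D _ hf)),
    D_sum (F := fun j => fun y => D (vp j) (D (vp j) f) y)
      (fun j => contDiff_D (vp j) (contDiff_D (vp j) hf))]
  have e1 : ∑ j : Fin d, D (vp i) (fun y => y.1 j * D (vx j) f y) x
      = D (vx i) f x + ∑ j : Fin d, x.1 j * D (vp i) (D (vx j) f) x := by
    have : ∀ j : Fin d, D (vp i) (fun y => y.1 j * D (vx j) f y) x
        = (EuclideanSpace.single i (1:ℝ)) j * D (vx j) f x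
          + x.1 j * D (vp i) (D (vx j) f) x := fun j =>
      D_coord_mul j (contDiff_D _ hf)
    rw [Finset.sum_congr rfl fun j _ => this j, Finset.sum_add_distrib,
      sum_single_mul i]
  have e2 : ∑ j : Fin d, D (vp i) (fun y => D (vp j) (D (vp j) f) y) x
      = ∑ j : Fin d, D (vp j) (D (vp j) (D (vp i) f)) x := by
    refine Finset.sum_congr rfl fun j _ => ?_
    show D (vp i) (D (vp j) (D (vp j) f)) x = _
    rw [D_comm (vp i) (vp j) (contDiff_D (vp j) hf), D_comm (vp i) (vp j) hf]
  rw [e1, e2, add_assoc]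

lemma DxLf (σ : ℝ) (hf : ContDiff ℝ (⊤ : ℕ∞) f) (i : Fin d) (x : Ed d × Ed d) :
    D (vx i) (Lkol d σ f) x = (∑ j : Fin d, x.1 j * D (vx i) (D (vx j) f) x)
      + σ^2/2 * ∑ j : Fin d, D (vp j) (D (vp j) (D (vx i) f)) x := by
  rw [Lkol_eq σ hf]
  have hS1 : ContDiff ℝ (⊤ : ℕ∞) (fun y : Ed d × Ed d => ∑ j : Fin d, y.1 j * D (vx j) f y) :=
    ContDiff.sum fun j _ => (contDiff_coord j).mul (contDiff_D _ hf)
  have hS2c : ContDiff ℝ (⊤ : ℕ∞) (fun y : Ed d × Ed d =>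
      σ^2/2 * ∑ j : Fin d, D (vp j) (D (vp j) f) y) :=
    contDiff_const.mul (ContDiff.sum fun j _ => contDiff_D _ (contDiff_D _ hf))
  rw [D_add hS1 hS2c,
    D_const_mul _ (ContDiff.sum fun j _ => contDiff_D (vp j) (contDiff_D (vp j) hf)),
    D_sum (F := fun j => fun y => y.1 j * D (vx j) f y)
      (fun j => (contDiff_coord j).mul (contDiff_D _ hf)),
    D_sum (F := fun j => fun y => D (vp j) (D (vp j) f) y)
      (fun j => contDiff_D (vp j) (contDiff_D (vp j) hf))]
  have e1 : ∑ j : Fin d, D (vx i) (fun y => y.1 j * D (vx j) f y) x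
      = ∑ j : Fin d, x.1 j * D (vx i) (D (vx j) f) x := by
    refine Finset.sum_congr rfl fun j _ => ?_
    rw [D_coord_mul j (contDiff_D _ hf)]
    show (0 : Ed d) j * D (vx j) f x + x.1 j * D (vx i) (D (vx j) f) x = _
    simp
  have e2 : ∑ j : Fin d, D (vx i) (fun y => D (vp j) (D (vp j) f) y) x
      = ∑ j : Fin d, D (vp j) (D (vp j) (D (vx i) f)) x := by
    refine Finset.sum_congr rfl fun j _ => ?_
    show D (vx i) (D (vp j) (D (vp j) f)) x = _
    rw [D_comm (vx i) (vp j) (contDiff_D (vp j) hf), D_comm (vx i) (vp j) hf]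
  rw [e1, e2]

-- Part 4: the abstract algebraic identity
lemma sum_split4 (n : ℕ) (c1 c2 c3 c4 : ℝ) (m1 m2 m3 m4 : Fin n → Fin n → ℝ) :
    ∑ i : Fin n, ∑ j : Fin n,
        (c1 * m1 i j + c2 * m2 i j + c3 * m3 i j + c4 * m4 i j)
      = c1 * (∑ i : Fin n, ∑ j : Fin n, m1 i j) + c2 * (∑ i : Fin n, ∑ j : Fin n, m2 i j)
        + c3 * (∑ i : Fin n, ∑ j : Fin n, m3 i j)
        + c4 * (∑ i : Fin n, ∑ j : Fin n, m4 i j) := by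
  simp only [Finset.mul_sum, Finset.sum_add_distrib]

lemma sum_split8 (n : ℕ) (c1 c2 c3 c4 c5 c6 c7 c8 : ℝ)
    (m1 m2 m3 m4 m5 m6 m7 m8 : Fin n → Fin n → ℝ) :
    ∑ i : Fin n, ∑ j : Fin n,
        (c1 * m1 i j + c2 * m2 i j + c3 * m3 i j + c4 * m4 i j
          + c5 * m5 i j + c6 * m6 i j + c7 * m7 i j + c8 * m8 i j)
      = c1 * (∑ i : Fin n, ∑ j : Fin n, m1 i j) + c2 * (∑ i : Fin n, ∑ j : Fin n, m2 i j)
        + c3 * (∑ i : Fin n, ∑ j : Fin n, m3 i j) + c4 * (∑ i : Fin n, ∑ j : Fin n, m4 i j)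
        + c5 * (∑ i : Fin n, ∑ j : Fin n, m5 i j) + c6 * (∑ i : Fin n, ∑ j : Fin n, m6 i j)
        + c7 * (∑ i : Fin n, ∑ j : Fin n, m7 i j)
        + c8 * (∑ i : Fin n, ∑ j : Fin n, m8 i j) := by
  simp only [Finset.mul_sum, Finset.sum_add_distrib]

lemma key (n : ℕ) (α β c : ℝ) (X a b : Fin n → ℝ) (p q r tp tx : Fin n → Fin n → ℝ)
    (hr : ∀ i j, r i j = r j i) :
    1/2 * ((∑ i : Fin n, X i * (∑ j : Fin n,
          (2*(q j i * a j) - 2*α*(q j i * b j) - 2*α*(a j * r i j)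
            + 2*(α^2+β)*(r i j * b j))))
        + c * ∑ k : Fin n, ∑ j : Fin n,
          (2*(tp k j * a j + p k j * p k j) - 2*α*(tp k j * b j + p k j * q k j)
            - 2*α*(p k j * q k j + a j * tx k j)
            + 2*(α^2+β)*(tx k j * b j + q k j * q k j)))
      - ((∑ i : Fin n, a i * (b i + (∑ j : Fin n, X j * q i j)
            + c * ∑ j : Fin n, tp j i))
        - α * (∑ i : Fin n, a i * ((∑ j : Fin n, X j * r i j)
            + c * ∑ j : Fin n, tx j i))
        - α * (∑ i : Fin n, b i * (b i + (∑ j : Fin n, X j * q i j)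
            + c * ∑ j : Fin n, tp j i))
        + (α^2+β) * (∑ i : Fin n, b i * ((∑ j : Fin n, X j * r i j)
            + c * ∑ j : Fin n, tx j i)))
    = α * ∑ i : Fin n, b i ^ 2 - ∑ i : Fin n, b i * a i
      + c * ∑ i : Fin n, ∑ j : Fin n, (p i j - α * q i j)^2
      + c * β * ∑ i : Fin n, ∑ j : Fin n, (q i j)^2 := by
  have hmul : ∀ (u v w : ℝ) (g h : Fin n → ℝ),
      u * (v + (∑ j : Fin n, g j) + w * ∑ j : Fin n, h j)
        = u * v + (∑ j : Fin n, u * g j) + w * ∑ j : Fin n, u * h j := by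
    intro u v w g h
    rw [← Finset.mul_sum, ← Finset.mul_sum]; ring
  have hmul2 : ∀ (u w : ℝ) (g h : Fin n → ℝ),
      u * ((∑ j : Fin n, g j) + w * ∑ j : Fin n, h j)
        = (∑ j : Fin n, u * g j) + w * ∑ j : Fin n, u * h j := by
    intro u w g h
    rw [← Finset.mul_sum, ← Finset.mul_sum]; ring
  -- expand the transport part of (1/2)LΓ
  have E1 : (∑ i : Fin n, X i * (∑ j : Fin n,
        (2*(q j i * a j) - 2*α*(q j i * b j) - 2*α*(a j * r i j)
          + 2*(α^2+β)*(r i j * b j))))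
      = 2 * (∑ i : Fin n, ∑ j : Fin n, X i * (a j * q j i))
        + (-(2*α)) * (∑ i : Fin n, ∑ j : Fin n, X i * (b j * q j i))
        + (-(2*α)) * (∑ i : Fin n, ∑ j : Fin n, X i * (a j * r i j))
        + (2*(α^2+β)) * (∑ i : Fin n, ∑ j : Fin n, X i * (b j * r i j)) := by
    rw [← sum_split4]
    refine Finset.sum_congr rfl fun i _ => ?_
    rw [Finset.mul_sum]
    exact Finset.sum_congr rfl fun j _ => by ring
  -- expand the diffusion part of (1/2)LΓ
  have E2 : (∑ k : Fin n, ∑ j : Fin n,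
        (2*(tp k j * a j + p k j * p k j) - 2*α*(tp k j * b j + p k j * q k j)
          - 2*α*(p k j * q k j + a j * tx k j)
          + 2*(α^2+β)*(tx k j * b j + q k j * q k j)))
      = 2 * (∑ k : Fin n, ∑ j : Fin n, a j * tp k j)
        + 2 * (∑ k : Fin n, ∑ j : Fin n, p k j * p k j)
        + (-(2*α)) * (∑ k : Fin n, ∑ j : Fin n, b j * tp k j)
        + (-(4*α)) * (∑ k : Fin n, ∑ j : Fin n, p k j * q k j)
        + (-(2*α)) * (∑ k : Fin n, ∑ j : Fin n, a j * tx k j)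
        + (2*(α^2+β)) * (∑ k : Fin n, ∑ j : Fin n, b j * tx k j)
        + (2*(α^2+β)) * (∑ k : Fin n, ∑ j : Fin n, q k j * q k j)
        + 0 * (∑ k : Fin n, ∑ j : Fin n, a j * tp k j) := by
    rw [← sum_split8]
    exact Finset.sum_congr rfl fun k _ => Finset.sum_congr rfl fun j _ => by ring
  -- expand the Γ(f,Lf) pieces
  have E3 : (∑ i : Fin n, a i * (b i + (∑ j : Fin n, X j * q i j)
        + c * ∑ j : Fin n, tp j i))
      = (∑ i : Fin n, a i * b i)
        + (∑ i : Fin n, ∑ j : Fin n, a i * (X j * q i j))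
        + c * (∑ i : Fin n, ∑ j : Fin n, a i * tp j i) := by
    rw [Finset.sum_congr rfl fun i _ => hmul (a i) (b i) c _ _,
      Finset.sum_add_distrib, Finset.sum_add_distrib, ← Finset.mul_sum]
  have E4 : (∑ i : Fin n, a i * ((∑ j : Fin n, X j * r i j)
        + c * ∑ j : Fin n, tx j i))
      = (∑ i : Fin n, ∑ j : Fin n, a i * (X j * r i j))
        + c * (∑ i : Fin n, ∑ j : Fin n, a i * tx j i) := by
    rw [Finset.sum_congr rfl fun i _ => hmul2 (a i) c _ _,
      Finset.sum_add_distrib, ← Finset.mul_sum]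
  have E5 : (∑ i : Fin n, b i * (b i + (∑ j : Fin n, X j * q i j)
        + c * ∑ j : Fin n, tp j i))
      = (∑ i : Fin n, b i * b i)
        + (∑ i : Fin n, ∑ j : Fin n, b i * (X j * q i j))
        + c * (∑ i : Fin n, ∑ j : Fin n, b i * tp j i) := by
    rw [Finset.sum_congr rfl fun i _ => hmul (b i) (b i) c _ _,
      Finset.sum_add_distrib, Finset.sum_add_distrib, ← Finset.mul_sum]
  have E6 : (∑ i : Fin n, b i * ((∑ j : Fin n, X j * r i j)
        + c * ∑ j : Fin n, tx j i))
      = (∑ i : Fin n, ∑ j : Fin n, b i * (X j * r i j))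
        + c * (∑ i : Fin n, ∑ j : Fin n, b i * tx j i) := by
    rw [Finset.sum_congr rfl fun i _ => hmul2 (b i) c _ _,
      Finset.sum_add_distrib, ← Finset.mul_sum]
  -- swap identities
  have S1 : (∑ i : Fin n, ∑ j : Fin n, a i * (X j * q i j))
      = ∑ i : Fin n, ∑ j : Fin n, X i * (a j * q j i) := by
    rw [Finset.sum_comm]
    exact Finset.sum_congr rfl fun i _ => Finset.sum_congr rfl fun j _ => by ring
  have S2 : (∑ i : Fin n, ∑ j : Fin n, b i * (X j * q i j))
      = ∑ i : Fin n, ∑ j : Fin n, X i * (b j * q j i) := by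
    rw [Finset.sum_comm]
    exact Finset.sum_congr rfl fun i _ => Finset.sum_congr rfl fun j _ => by ring
  have S3 : (∑ i : Fin n, ∑ j : Fin n, a i * (X j * r i j))
      = ∑ i : Fin n, ∑ j : Fin n, X i * (a j * r i j) := by
    rw [Finset.sum_comm]
    refine Finset.sum_congr rfl fun i _ => Finset.sum_congr rfl fun j _ => ?_
    rw [hr j i]; ring
  have S4 : (∑ i : Fin n, ∑ j : Fin n, b i * (X j * r i j))
      = ∑ i : Fin n, ∑ j : Fin n, X i * (b j * r i j) := by
    rw [Finset.sum_comm]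
    refine Finset.sum_congr rfl fun i _ => Finset.sum_congr rfl fun j _ => ?_
    rw [hr j i]; ring
  have S5 : (∑ i : Fin n, ∑ j : Fin n, a i * tp j i)
      = ∑ k : Fin n, ∑ j : Fin n, a j * tp k j := Finset.sum_comm
  have S6 : (∑ i : Fin n, ∑ j : Fin n, b i * tp j i)
      = ∑ k : Fin n, ∑ j : Fin n, b j * tp k j := Finset.sum_comm
  have S7 : (∑ i : Fin n, ∑ j : Fin n, a i * tx j i)
      = ∑ k : Fin n, ∑ j : Fin n, a j * tx k j := Finset.sum_comm
  have S8 : (∑ i : Fin n, ∑ j : Fin n, b i * tx j i)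
      = ∑ k : Fin n, ∑ j : Fin n, b j * tx k j := Finset.sum_comm
  -- right-hand side atoms
  have E7 : (∑ i : Fin n, ∑ j : Fin n, (p i j - α * q i j)^2)
      = 1 * (∑ i : Fin n, ∑ j : Fin n, p i j * p i j)
        + (-(2*α)) * (∑ i : Fin n, ∑ j : Fin n, p i j * q i j)
        + (α^2) * (∑ i : Fin n, ∑ j : Fin n, q i j * q i j)
        + 0 * (∑ i : Fin n, ∑ j : Fin n, p i j * p i j) := by
    rw [← sum_split4]
    exact Finset.sum_congr rfl fun i _ => Finset.sum_congr rfl fun j _ => by ring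
  have E8 : (∑ i : Fin n, ∑ j : Fin n, (q i j)^2)
      = ∑ i : Fin n, ∑ j : Fin n, q i j * q i j :=
    Finset.sum_congr rfl fun i _ => Finset.sum_congr rfl fun j _ => by ring
  have E9 : (∑ i : Fin n, b i ^ 2) = ∑ i : Fin n, b i * b i :=
    Finset.sum_congr rfl fun i _ => by ring
  have E10 : (∑ i : Fin n, b i * a i) = ∑ i : Fin n, a i * b i :=
    Finset.sum_congr rfl fun i _ => by ring
  rw [E1, E2, E3, E4, E5, E6, S1, S2, S3, S4, S5, S6, S7, S8, E7, E8, E9, E10]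
  ring

end G2

/-- **Explicit formula for `Γ₂^{α,β}`.** For all `α, β ∈ ℝ` and smooth `f`,
`Γ₂^{α,β}(f) = α∑(∂_{ξ_i}f)² − ∑(∂_{ξ_i}f)(∂_{p_i}f)
  + (σ²/2)∑∑(∂²f/∂p_i∂p_j − α∂²f/∂p_i∂ξ_j)² + (σ²β/2)∑∑(∂²f/∂p_i∂ξ_j)²`. -/
theorem gamAB2_eq (d : ℕ) (hd : 1 ≤ d) (σ : ℝ) (hσ : 0 < σ) (α β : ℝ)
    (f : Ed d × Ed d → ℝ) (hf : ContDiff ℝ (⊤ : ℕ∞) f) (x : Ed d × Ed d) :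
    gamAB2 d σ α β f x =
      α * ∑ i : Fin d, (dXi d i f x) ^ 2 - ∑ i : Fin d, dXi d i f x * dP d i f x
        + σ ^ 2 / 2 * ∑ i : Fin d, ∑ j : Fin d,
            (dP d i (fun y => dP d j f y) x - α * dP d i (fun y => dXi d j f y) x) ^ 2
        + σ ^ 2 * β / 2 * ∑ i : Fin d, ∑ j : Fin d,
            (dP d i (fun y => dXi d j f y) x) ^ 2 := by
  have hGs : ContDiff ℝ (⊤ : ℕ∞) (gamAB d α β f f) := G2.gamAB_self_smooth hf
  have hLfs : ContDiff ℝ (⊤ : ℕ∞) (Lkol d σ f) := G2.Lkol_smooth σ hf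
  have hr : ∀ i j : Fin d,
      G2.D (G2.vx i) (G2.D (G2.vx j) f) x = G2.D (G2.vx j) (G2.D (G2.vx i) f) x :=
    fun i j => congrFun (G2.D_comm _ _ hf) x
  simp only [gamAB2]
  rw [G2.Lkol_expand σ hGs x,
    G2.gamAB_expand α β (hf.differentiable (by simp) x) (hLfs.differentiable (by simp) x)]
  simp only [G2.DxG α β hf, G2.DDpG α β hf, G2.DpLf σ hf, G2.DxLf σ hf,
    G2.dP_eq, G2.dXi_eq]
  linear_combination G2.key d α β (σ^2/2) (fun i => x.1 i)
    (fun i => G2.D (G2.vp i) f x) (fun i => G2.D (G2.vx i) f x)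
    (fun i j => G2.D (G2.vp i) (G2.D (G2.vp j) f) x)
    (fun i j => G2.D (G2.vp i) (G2.D (G2.vx j) f) x)
    (fun i j => G2.D (G2.vx i) (G2.D (G2.vx j) f) x)
    (fun k j => G2.D (G2.vp k) (G2.D (G2.vp k) (G2.D (G2.vp j) f)) x)
    (fun k j => G2.D (G2.vp k) (G2.D (G2.vp k) (G2.D (G2.vx j) f)) x) hr
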